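/- Let p be a prime and let H be an m × n matrix over GF(p) all of whose entries are 0 or 1. Suppose every column of H contains exactly d ≥ 2 ones, and the Tanner graph of H has girth at least g, where g is even and g ≥ 6. Then every nonzero vector x ∈ GF(p)^n with H·x = 0 has Hamming weight at least T(d,g). -/

import Mathlib

open scoped Classical

/-- The simple graph on the disjoint union `V ⊕ C` associated to a bipartite adjacency
relation between variable nodes `V` and constraint nodes `C`. -/
def bip {V C : Type*} (adj : V → C → Prop) : SimpleGraph (V ⊕ C) where
  Adj x y :=
    (∃ v c, x = Sum.inl v ∧ y = Sum.inr c ∧ adj v c) ∨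
    (∃ v c, x = Sum.inr c ∧ y = Sum.inl v ∧ adj v c)
  symm := by
    constructor
    rintro x y (⟨v, c, hx, hy, h⟩ | ⟨v, c, hx, hy, h⟩)
    · exact Or.inr ⟨v, c, hy, hx, h⟩
    · exact Or.inl ⟨v, c, hy, hx, h⟩
  loopless := by
    constructor
    rintro x (⟨v, c, hx, hy, h⟩ | ⟨v, c, hx, hy, h⟩) <;> subst hx <;> simp at hy

/-- The tree bound `T(d,g)` for `d ≥ 2` and even girth `g ≥ 6`:
`T(d,g) = 1 + d + d(d−1) + … + d(d−1)^{(g−6)/4}` when `g ≡ 2 (mod 4)`, and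
`T(d,g) = 1 + d + d(d−1) + … + d(d−1)^{(g−8)/4} + (d−1)^{(g−4)/4}` when `g ≡ 0 (mod 4)`. -/
def treeBound (d g : ℕ) : ℕ :=
  if g % 4 = 2 then
    1 + d * ∑ k ∈ Finset.range ((g - 6) / 4 + 1), (d - 1) ^ k
  else
    1 + d * ∑ k ∈ Finset.range ((g - 8) / 4 + 1), (d - 1) ^ k + (d - 1) ^ ((g - 4) / 4)

/-!
Let `S` be the support of `x`. Since `H` has `0/1` entries and `H x = 0`, no row of `H` meets `S`
in exactly one column: `S` is a stopping set. In the Tanner graph restricted to the columns in `S`,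
every column node of `S` therefore has degree `≥ d` and every row node of positive degree has
degree `≥ 2`. Below half the girth a path from a fixed root is determined by its endpoint, so
counting paths from a root by length bounds `|S|` from below. Rooted at a column of `S`, the even
levels contribute `1, d, d(d-1), …, d(d-1)^(L-1)` when `g = 4L + 2`. When `g = 4L + 4` one roots
at a row node instead: its odd levels contribute `2, 2(d-1), …, 2(d-1)^L`, which adds up to exactly
`T(d,g)`.
-/

open Finset

namespace SimpleGraph

variable {V : Type*} {G : SimpleGraph V}

theorem Walk.IsPath.eq_of_length_add_length_lt_egirth {u v : V} {p q : G.Walk u v}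
    (hp : p.IsPath) (hq : q.IsPath) (hlt : ((p.length + q.length : ℕ) : ℕ∞) < G.egirth) :
    p = q := by
  -- The edges of `p` and `q` span a graph with fewer edges than the girth, hence a forest.
  let H : SimpleGraph V := fromEdgeSet {e | e ∈ p.edges ∨ e ∈ q.edges}
  have hpH : ∀ e ∈ p.edges, e ∈ H.edgeSet := fun e he => by
    simp [H, he, G.not_isDiag_of_mem_edgeSet (p.edges_subset_edgeSet he)]
  have hqH : ∀ e ∈ q.edges, e ∈ H.edgeSet := fun e he => by
    simp [H, he, G.not_isDiag_of_mem_edgeSet (q.edges_subset_edgeSet he)]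
  have hHG : H ≤ G := (fromEdgeSet_le G).mpr fun e he => by
    rcases he.1 with he | he
    exacts [p.edges_subset_edgeSet he, q.edges_subset_edgeSet he]
  have hH : H.IsAcyclic := by
    intro a c hc
    have hlen : c.length ≤ p.length + q.length := by
      rw [← c.length_edges, ← p.length_edges, ← q.length_edges, ← List.length_append]
      refine (List.subperm_of_subset hc.edges_nodup fun e he => ?_).length_le
      have he' := c.edges_subset_edgeSet he
      simp only [H, edgeSet_fromEdgeSet, Set.mem_sdiff, Set.mem_ofPred_eq] at he'
      exact List.mem_append.mpr he'.1
    have := (egirth_anti hHG).trans (egirth_le_length hc)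
    exact absurd (hlt.trans_le this) (not_lt.mpr (by exact_mod_cast hlen))
  have hpq := congrArg (fun r : H.Path u v => r.1.transfer G fun e he =>
    edgeSet_mono hHG (r.1.edges_subset_edgeSet he))
    ((hH.subsingleton_path u v).elim ⟨p.transfer H hpH, hp.transfer hpH⟩
      ⟨q.transfer H hqH, hq.transfer hqH⟩)
  simpa [transfer_transfer, transfer_self] using hpq

theorem Walk.sigma_eq_of_cons_eq {r w w' u u' : V} {h : G.Adj w u} {h' : G.Adj w' u'}
    {p : G.Walk u r} {p' : G.Walk u' r}
    (e : (⟨w, .cons h p⟩ : Σ x, G.Walk x r) = ⟨w', .cons h' p'⟩) :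
    (⟨u, p⟩ : Σ x, G.Walk x r) = ⟨u', p'⟩ := by
  cases e; rfl

section PathsTo

variable [Fintype V] [DecidableEq V] [DecidableRel G.Adj]

-- Paths are indexed by their start and end at `r`, so that a path grows by `Walk.cons`.
variable (G) in
def pathsTo (r : V) (n : ℕ) : Finset (Σ w, G.Walk w r) :=
  univ.sigma fun w => {p ∈ G.finsetWalkLength n w r | p.IsPath}

theorem mem_pathsTo {r : V} {n : ℕ} {σ : Σ w, G.Walk w r} :
    σ ∈ G.pathsTo r n ↔ σ.2.IsPath ∧ σ.2.length = n := by
  simp [pathsTo, mem_finsetWalkLength_iff, and_comm]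

theorem pathsTo_zero (r : V) : G.pathsTo r 0 = {⟨r, .nil⟩} := by
  ext ⟨w, p⟩
  simp only [mem_pathsTo, mem_singleton]
  constructor
  · rintro ⟨-, hp⟩
    cases p with
    | nil => rfl
    | cons => simp at hp
  · rintro ⟨⟩
    simp

theorem adj_snd_of_mem_pathsTo {r : V} {n : ℕ} {σ : Σ w, G.Walk w r} (hσ : σ ∈ G.pathsTo r n)
    (hn : n ≠ 0) : G.Adj σ.1 σ.2.snd :=
  σ.2.adj_snd (Walk.not_nil_iff_lt_length.mpr (by rw [(mem_pathsTo.mp hσ).2]; omega))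

theorem sum_card_filter_not_mem_support_le_card_pathsTo_succ (r : V) (n : ℕ) :
    ∑ σ ∈ G.pathsTo r n, #{w ∈ G.neighborFinset σ.1 | w ∉ σ.2.support} ≤
      #(G.pathsTo r (n + 1)) := by
  let extend (σ : Σ w, G.Walk w r) : Finset (Σ w, G.Walk w r) :=
    {w ∈ G.neighborFinset σ.1 | w ∉ σ.2.support}.attach.image fun w =>
      (⟨w.1, .cons ((mem_neighborFinset _ _ _).mp (mem_filter.mp w.2).1).symm σ.2⟩ :
        Σ w, G.Walk w r)
  calc ∑ σ ∈ G.pathsTo r n, #{w ∈ G.neighborFinset σ.1 | w ∉ σ.2.support}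
      = ∑ σ ∈ G.pathsTo r n, #(extend σ) := by
        refine sum_congr rfl fun σ _ => ?_
        rw [card_image_of_injective _ fun w w' e => Subtype.ext (congrArg Sigma.fst e),
          card_attach]
    _ = #((G.pathsTo r n).biUnion extend) := by
        refine (card_biUnion fun σ _ τ _ hne => Finset.disjoint_left.mpr ?_).symm
        simp only [extend, mem_image]
        rintro _ ⟨w, -, rfl⟩ ⟨w', -, e⟩
        exact hne (Walk.sigma_eq_of_cons_eq e).symm
    _ ≤ #(G.pathsTo r (n + 1)) := by
        refine card_le_card fun τ hτ => ?_
        simp only [extend, mem_biUnion, mem_image] at hτ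
        obtain ⟨σ, hσ, w, -, rfl⟩ := hτ
        obtain ⟨hp, hl⟩ := mem_pathsTo.mp hσ
        exact mem_pathsTo.mpr ⟨hp.cons (mem_filter.mp w.2).2, by simp [hl]⟩

theorem Walk.IsPath.card_filter_mem_support_le_one {u r : V} {p : G.Walk u r} (hp : p.IsPath)
    (hlt : ((p.length + 1 : ℕ) : ℕ∞) < G.egirth) :
    #{w ∈ G.neighborFinset u | w ∈ p.support} ≤ 1 := by
  have eq_snd : ∀ w, G.Adj u w → (hw : w ∈ p.support) → w = p.snd := by
    intro w h hw
    have e : p.takeUntil w hw = .cons h .nil := by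
      refine (hp.takeUntil hw).eq_of_length_add_length_lt_egirth (by simp [h.ne]) ?_
      refine lt_of_le_of_lt ?_ hlt
      simpa using (p.length_takeUntil_le_length hw)
    calc w = ((p.takeUntil w hw).append (p.dropUntil w hw)).snd := by simp [e]
      _ = p.snd := by rw [p.take_spec hw]
  refine card_le_one.mpr fun a ha b hb => ?_
  simp only [mem_filter, mem_neighborFinset] at ha hb
  rw [eq_snd a ha.1 ha.2, eq_snd b hb.1 hb.2]

theorem mul_card_pathsTo_le_card_pathsTo_succ {r : V} {n δ : ℕ}
    (hlt : ((n + 1 : ℕ) : ℕ∞) < G.egirth) (hδ : ∀ σ ∈ G.pathsTo r n, δ ≤ G.degree σ.1) :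
    (δ - 1) * #(G.pathsTo r n) ≤ #(G.pathsTo r (n + 1)) := by
  calc (δ - 1) * #(G.pathsTo r n) = ∑ _σ ∈ G.pathsTo r n, (δ - 1) := by
        rw [sum_const, smul_eq_mul, mul_comm]
    _ ≤ ∑ σ ∈ G.pathsTo r n, #{w ∈ G.neighborFinset σ.1 | w ∉ σ.2.support} := by
        refine sum_le_sum fun σ hσ => ?_
        obtain ⟨hp, hl⟩ := mem_pathsTo.mp hσ
        have hsplit := card_filter_add_card_filter_not
          (s := G.neighborFinset σ.1) (· ∈ σ.2.support)
        have hon := hp.card_filter_mem_support_le_one (by rwa [hl])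
        rw [card_neighborFinset_eq_degree] at hsplit
        have := hδ σ hσ
        omega
    _ ≤ #(G.pathsTo r (n + 1)) := sum_card_filter_not_mem_support_le_card_pathsTo_succ r n

theorem degree_le_card_pathsTo_one (r : V) : G.degree r ≤ #(G.pathsTo r 1) := by
  have h := sum_card_filter_not_mem_support_le_card_pathsTo_succ (G := G) r 0
  rwa [pathsTo_zero, sum_singleton, filter_true_of_mem fun w hw => by
    simpa using ((mem_neighborFinset _ _ _).mp hw).ne', card_neighborFinset_eq_degree] at h

theorem sum_card_pathsTo_le_card {r : V} {J : Finset ℕ} {k : ℕ} {s : Finset V}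
    (hk : ((2 * k : ℕ) : ℕ∞) < G.egirth) (hJ : ∀ j ∈ J, j ≤ k)
    (hs : ∀ j ∈ J, ∀ σ ∈ G.pathsTo r j, σ.1 ∈ s) :
    ∑ j ∈ J, #(G.pathsTo r j) ≤ #s := by
  rw [← card_biUnion fun j _ j' _ hne => Finset.disjoint_left.mpr fun σ hσ hσ' =>
    hne ((mem_pathsTo.mp hσ).2.symm.trans (mem_pathsTo.mp hσ').2)]
  refine card_le_card_of_injOn Sigma.fst (fun σ hσ => ?_) ?_
  · obtain ⟨j, hj, hσ⟩ := mem_biUnion.mp hσ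
    exact hs j hj σ hσ
  · rintro ⟨w, p⟩ hp ⟨w', q⟩ hq (rfl : w = w')
    obtain ⟨j, hj, hp, rfl⟩ := by simpa only [coe_biUnion, mem_coe, Set.mem_iUnion, mem_pathsTo,
      exists_prop] using hp
    obtain ⟨j', hj', hq, rfl⟩ := by simpa only [coe_biUnion, mem_coe, Set.mem_iUnion, mem_pathsTo,
      exists_prop] using hq
    rw [hp.eq_of_length_add_length_lt_egirth hq (lt_of_le_of_lt ?_ hk)]
    have := hJ _ hj
    have := hJ _ hj'
    exact_mod_cast (by omega : p.length + q.length ≤ 2 * k)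

end PathsTo

end SimpleGraph

open SimpleGraph

section Bip

variable {V C : Type*} {adj : V → C → Prop}

@[simp] theorem bip_adj_inl_inr {v : V} {c : C} : (bip adj).Adj (.inl v) (.inr c) ↔ adj v c := by
  simp [bip]

@[simp] theorem bip_adj_inr_inl {v : V} {c : C} : (bip adj).Adj (.inr c) (.inl v) ↔ adj v c := by
  simp [bip]

@[simp] theorem not_bip_adj_inl_inl {v v' : V} : ¬(bip adj).Adj (.inl v) (.inl v') := by
  simp [bip]

@[simp] theorem not_bip_adj_inr_inr {c c' : C} : ¬(bip adj).Adj (.inr c) (.inr c') := by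
  simp [bip]

theorem bip_mono {adj' : V → C → Prop} (h : ∀ v c, adj v c → adj' v c) : bip adj ≤ bip adj' := by
  rintro (v | c) (v' | c') hadj <;> simp_all

def bipColoring (adj : V → C → Prop) : (bip adj).Coloring Bool :=
  Coloring.mk Sum.isLeft fun {u w} h => by cases u <;> cases w <;> simp_all

variable [Fintype V] [Fintype C]

theorem neighborFinset_bip_inl (v : V) :
    (bip adj).neighborFinset (.inl v) = ({c | adj v c} : Finset C).map .inr := by
  ext (v' | c) <;> simp

theorem neighborFinset_bip_inr (c : C) :
    (bip adj).neighborFinset (.inr c) = ({v | adj v c} : Finset V).map .inl := by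
  ext (v | c') <;> simp

theorem degree_bip_inl (v : V) : (bip adj).degree (.inl v) = #{c | adj v c} := by
  rw [← card_neighborFinset_eq_degree, neighborFinset_bip_inl, card_map]

theorem degree_bip_inr (c : C) : (bip adj).degree (.inr c) = #{v | adj v c} := by
  rw [← card_neighborFinset_eq_degree, neighborFinset_bip_inr, card_map]

end Bip

def IsStoppingSet {V C : Type*} (adj : V → C → Prop) (S : Finset V) : Prop :=
  ∀ c, #{v ∈ S | adj v c} ≠ 1

theorem Matrix.isStoppingSet_support_of_mulVec_eq_zero {ι κ R : Type*} [Fintype κ]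
    [NonAssocSemiring R] {H : Matrix ι κ R} (h01 : ∀ i j, H i j = 0 ∨ H i j = 1)
    {x : κ → R} (hx : H.mulVec x = 0) : IsStoppingSet (fun j i => H i j = 1) {j | x j ≠ 0} := by
  intro i hone
  obtain ⟨j₀, hj₀⟩ := card_eq_one.mp hone
  obtain ⟨hmem, hunique⟩ := eq_singleton_iff_unique_mem.mp hj₀
  simp only [mem_filter, mem_univ, true_and] at hmem hunique
  have hrow : H.mulVec x i = x j₀ := by
    rw [Matrix.mulVec, dotProduct, sum_eq_single j₀ (fun j _ hj => ?_) (by simp), hmem.2, one_mul]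
    rcases h01 i j with h | h
    · rw [h, zero_mul]
    · by_contra hne
      exact hj (hunique j ⟨right_ne_zero_of_mul hne, h⟩)
  exact hmem.1 (hrow.symm.trans (congrFun hx i))

theorem treeBound_four_mul_add_two (d : ℕ) {L : ℕ} (hL : L ≠ 0) :
    treeBound d (4 * L + 2) = 1 + d * ∑ k ∈ range L, (d - 1) ^ k := by
  rw [treeBound, if_pos (by omega), show (4 * L + 2 - 6) / 4 + 1 = L by omega]

theorem one_add_mul_geom_sum_add_pow {d : ℕ} (hd : d ≠ 0) (L : ℕ) :
    1 + d * ∑ k ∈ range L, (d - 1) ^ k + (d - 1) ^ L = 2 * ∑ k ∈ range (L + 1), (d - 1) ^ k := by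
  obtain ⟨e, rfl⟩ : ∃ e, d = e + 1 := ⟨d - 1, by omega⟩
  simp only [Nat.add_one_sub_one]
  induction L with
  | zero => simp
  | succ L ih =>
    simp only [sum_range_succ, pow_succ] at ih ⊢
    linear_combination ih

theorem treeBound_four_mul_add_four {d : ℕ} (hd : d ≠ 0) {L : ℕ} (hL : L ≠ 0) :
    treeBound d (4 * L + 4) = 2 * ∑ k ∈ range (L + 1), (d - 1) ^ k := by
  rw [treeBound, if_neg (by omega), show (4 * L + 4 - 8) / 4 + 1 = L by omega,
    show (4 * L + 4 - 4) / 4 = L by omega, one_add_mul_geom_sum_add_pow hd]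

section TannerGraph

variable {V C : Type*} {adj : V → C → Prop}

theorem isLeft_iff_of_mem_pathsTo [Fintype V] [Fintype C] {r : V ⊕ C} {n : ℕ}
    {σ : Σ w, (bip adj).Walk w r} (hσ : σ ∈ (bip adj).pathsTo r n) :
    σ.1.isLeft ↔ (Even n ↔ r.isLeft) := by
  have := (bipColoring adj).even_length_iff_congr σ.2
  rw [(mem_pathsTo.mp hσ).2] at this
  simp only [bipColoring, Coloring.mk] at this
  tauto

theorem exists_adj_of_walk {r : V ⊕ C} (hr : ∀ v, r = .inl v → ∃ c, adj v c) {v : V}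
    (p : (bip adj).Walk (.inl v) r) : ∃ c, adj v c := by
  cases p with
  | nil => exact hr v rfl
  | @cons _ w _ h _ =>
    rcases w with v' | c
    · simp at h
    · exact ⟨c, by simpa using h⟩

variable [Fintype V] [Fintype C] {d g : ℕ}

theorem le_degree_bip_inl_of_adj (hvar : ∀ v c, adj v c → d ≤ #{c | adj v c}) {v : V}
    {w : V ⊕ C} (h : (bip adj).Adj (.inl v) w) : d ≤ (bip adj).degree (.inl v) := by
  rcases w with v' | c
  · simp at h
  · rw [degree_bip_inl]
    exact hvar v c (by simpa using h)

theorem two_le_degree_bip_of_adj (hd : 2 ≤ d) (hvar : ∀ v c, adj v c → d ≤ #{c | adj v c})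
    (hcheck : ∀ c, #{v | adj v c} ≠ 1) {u w : V ⊕ C} (h : (bip adj).Adj u w) :
    2 ≤ (bip adj).degree u := by
  rcases u with v | c
  · exact hd.trans (le_degree_bip_inl_of_adj hvar h)
  · rcases w with v | c'
    · have hpos : 0 < #{v | adj v c} := card_pos.mpr ⟨v, by simpa using h⟩
      have := hcheck c
      rw [degree_bip_inr]
      omega
    · simp at h

theorem mul_card_pathsTo_le_card_pathsTo_add_two (hd : 2 ≤ d)
    (hvar : ∀ v c, adj v c → d ≤ #{c | adj v c}) (hcheck : ∀ c, #{v | adj v c} ≠ 1)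
    (hg : (g : ℕ∞) ≤ (bip adj).egirth) {r : V ⊕ C} {n : ℕ} (hn : n ≠ 0) (hng : n + 2 < g) :
    (d - 1) * #((bip adj).pathsTo r n) ≤ #((bip adj).pathsTo r (n + 2)) := by
  have hdeg : ∀ m ≠ 0, ∀ σ ∈ (bip adj).pathsTo r m,
      2 ≤ (bip adj).degree σ.1 ∧ (σ.1.isLeft → d ≤ (bip adj).degree σ.1) := by
    rintro m hm ⟨u, p⟩ hσ
    have hadj := adj_snd_of_mem_pathsTo hσ hm
    refine ⟨two_le_degree_bip_of_adj hd hvar hcheck hadj, fun hleft => ?_⟩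
    rcases u with v | c
    · exact le_degree_bip_inl_of_adj hvar hadj
    · simp at hleft
  have step := fun m δ (hm : m + 1 < g) hδ =>
    mul_card_pathsTo_le_card_pathsTo_succ (G := bip adj) (r := r) (n := m) (δ := δ)
      ((Nat.cast_lt.mpr hm).trans_le hg) hδ
  -- Levels alternate between column and row nodes; the column level gives the factor `d - 1`.
  by_cases hpar : Even n ↔ r.isLeft
  · have h1 := step n d (by omega) fun σ hσ =>
      (hdeg n hn σ hσ).2 ((isLeft_iff_of_mem_pathsTo hσ).mpr hpar)
    have h2 := step (n + 1) 2 (by omega) fun σ hσ => (hdeg (n + 1) (by omega) σ hσ).1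
    exact h1.trans (by simpa using h2)
  · have h1 := step n 2 (by omega) fun σ hσ => (hdeg n hn σ hσ).1
    have h2 := step (n + 1) d (by omega) fun σ hσ =>
      (hdeg (n + 1) (by omega) σ hσ).2 ((isLeft_iff_of_mem_pathsTo hσ).mpr
        (by rw [Nat.even_add_one]; tauto))
    exact (Nat.mul_le_mul_left _ (by simpa using h1)).trans h2

theorem pow_mul_card_pathsTo_le (hd : 2 ≤ d) (hvar : ∀ v c, adj v c → d ≤ #{c | adj v c})
    (hcheck : ∀ c, #{v | adj v c} ≠ 1) (hg : (g : ℕ∞) ≤ (bip adj).egirth) {r : V ⊕ C} {n k : ℕ}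
    (hn : n ≠ 0) (hnk : n + 2 * k < g) :
    (d - 1) ^ k * #((bip adj).pathsTo r n) ≤ #((bip adj).pathsTo r (n + 2 * k)) := by
  induction k with
  | zero => simp
  | succ k ih =>
    calc (d - 1) ^ (k + 1) * #((bip adj).pathsTo r n)
        = (d - 1) * ((d - 1) ^ k * #((bip adj).pathsTo r n)) := by ring
      _ ≤ (d - 1) * #((bip adj).pathsTo r (n + 2 * k)) :=
        Nat.mul_le_mul_left _ (ih (by omega))
      _ ≤ #((bip adj).pathsTo r (n + 2 * (k + 1))) :=
        mul_card_pathsTo_le_card_pathsTo_add_two hd hvar hcheck hg (by omega) (by omega)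

theorem sum_card_pathsTo_bip_le_card (hg : (g : ℕ∞) ≤ (bip adj).egirth) {s : Finset V}
    (hs : ∀ v c, adj v c → v ∈ s) {r : V ⊕ C} (hr : ∀ v, r = .inl v → ∃ c, adj v c) {n N : ℕ}
    (hpar : Even n ↔ r.isLeft) (hN : 2 * (n + 2 * N) < g) :
    ∑ k ∈ range (N + 1), #((bip adj).pathsTo r (n + 2 * k)) ≤ #s := by
  rw [← sum_image (f := fun j => #((bip adj).pathsTo r j)) (g := fun k => n + 2 * k)
      fun _ _ _ _ h => by simpa using h,
    ← card_map Function.Embedding.inl]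
  refine sum_card_pathsTo_le_card (k := n + 2 * N) ((Nat.cast_lt.mpr hN).trans_le hg)
    (fun j hj => ?_) fun j hj ⟨u, p⟩ hσ => ?_
  · obtain ⟨k, hk, rfl⟩ := mem_image.mp hj
    have := mem_range.mp hk
    omega
  · obtain ⟨k, -, rfl⟩ := mem_image.mp hj
    have hleft := (isLeft_iff_of_mem_pathsTo hσ).mpr (by simpa [Nat.even_add] using hpar)
    rcases u with v | c
    · obtain ⟨c, hc⟩ := exists_adj_of_walk hr p
      simpa using hs v c hc
    · simp at hleft

theorem one_add_mul_geom_sum_le_card_of_bip (hd : 2 ≤ d)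
    (hvar : ∀ v c, adj v c → d ≤ #{c | adj v c}) (hcheck : ∀ c, #{v | adj v c} ≠ 1)
    (hg : (g : ℕ∞) ≤ (bip adj).egirth) {v₀ : V} {c₀ : C} (h₀ : adj v₀ c₀) {s : Finset V}
    (hs : ∀ v c, adj v c → v ∈ s) {L : ℕ} (hLg : 4 * L < g) :
    1 + d * ∑ k ∈ range L, (d - 1) ^ k ≤ #s := by
  set P := (bip adj).pathsTo (.inl v₀)
  have hP₂ (hg2 : 2 < g) : d ≤ #(P 2) := by
    have h₁ := (le_degree_bip_inl_of_adj hvar (bip_adj_inl_inr.mpr h₀)).trans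
      (degree_le_card_pathsTo_one _)
    have h₂ := mul_card_pathsTo_le_card_pathsTo_succ (r := .inl v₀) (n := 1) (δ := 2)
      ((Nat.cast_lt.mpr (by omega)).trans_le hg) fun σ hσ =>
        two_le_degree_bip_of_adj hd hvar hcheck (adj_snd_of_mem_pathsTo hσ one_ne_zero)
    simp only [Nat.add_one_sub_one, one_mul] at h₂
    exact h₁.trans h₂
  calc 1 + d * ∑ k ∈ range L, (d - 1) ^ k
      ≤ #(P 0) + ∑ k ∈ range L, #(P (2 + 2 * k)) := by
        rw [show #(P 0) = 1 by simp [P, pathsTo_zero], mul_sum]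
        refine Nat.add_le_add_left (sum_le_sum fun k hk => ?_) 1
        have hk := mem_range.mp hk
        have := pow_mul_card_pathsTo_le hd hvar hcheck hg (r := .inl v₀) (n := 2) (k := k)
          (by omega) (by omega)
        calc d * (d - 1) ^ k ≤ (d - 1) ^ k * #(P 2) := by
              rw [mul_comm]; exact Nat.mul_le_mul_left _ (hP₂ (by omega))
          _ ≤ _ := this
    _ = ∑ k ∈ range (L + 1), #(P (0 + 2 * k)) := by
        rw [sum_range_succ', add_comm]
        simp only [zero_add, mul_add_one, add_comm, mul_zero]
    _ ≤ #s :=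
        sum_card_pathsTo_bip_le_card hg hs (fun v hv => ⟨c₀, Sum.inl_injective hv ▸ h₀⟩)
          (by simp) (by omega)

theorem two_mul_geom_sum_le_card_of_bip (hd : 2 ≤ d)
    (hvar : ∀ v c, adj v c → d ≤ #{c | adj v c}) (hcheck : ∀ c, #{v | adj v c} ≠ 1)
    (hg : (g : ℕ∞) ≤ (bip adj).egirth) {v₀ : V} {c₀ : C} (h₀ : adj v₀ c₀) {s : Finset V}
    (hs : ∀ v c, adj v c → v ∈ s) {L : ℕ} (hLg : 4 * L + 2 < g) :
    2 * ∑ k ∈ range (L + 1), (d - 1) ^ k ≤ #s := by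
  set P := (bip adj).pathsTo (.inr c₀)
  have hP₁ : 2 ≤ #(P 1) :=
    (two_le_degree_bip_of_adj hd hvar hcheck (bip_adj_inr_inl.mpr h₀)).trans
      (degree_le_card_pathsTo_one _)
  calc 2 * ∑ k ∈ range (L + 1), (d - 1) ^ k
      ≤ ∑ k ∈ range (L + 1), #(P (1 + 2 * k)) := by
        rw [mul_sum]
        refine sum_le_sum fun k hk => ?_
        calc 2 * (d - 1) ^ k ≤ (d - 1) ^ k * #(P 1) := by
              rw [mul_comm]; exact Nat.mul_le_mul_left _ hP₁
          _ ≤ _ := pow_mul_card_pathsTo_le hd hvar hcheck hg (by omega)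
              (by have := mem_range.mp hk; omega)
    _ ≤ #s :=
        sum_card_pathsTo_bip_le_card hg hs (fun v hv => by simp at hv) (by simp) (by omega)

theorem treeBound_le_card_of_bip (hd : 2 ≤ d) (hg6 : 6 ≤ g) (hge : Even g)
    (hg : (g : ℕ∞) ≤ (bip adj).egirth) (hvar : ∀ v c, adj v c → d ≤ #{c | adj v c})
    (hcheck : ∀ c, #{v | adj v c} ≠ 1) {v₀ : V} {c₀ : C} (h₀ : adj v₀ c₀) {s : Finset V}
    (hs : ∀ v c, adj v c → v ∈ s) : treeBound d g ≤ #s := by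
  obtain ⟨L, hL0, rfl | rfl⟩ : ∃ L ≠ 0, g = 4 * L + 2 ∨ g = 4 * L + 4 := by
    obtain ⟨k, rfl⟩ := hge
    exact ⟨(k - 1) / 2, by omega, by omega⟩
  · rw [treeBound_four_mul_add_two d hL0]
    exact one_add_mul_geom_sum_le_card_of_bip hd hvar hcheck hg h₀ hs (by omega)
  · rw [treeBound_four_mul_add_four (by omega) hL0]
    exact two_mul_geom_sum_le_card_of_bip hd hvar hcheck hg h₀ hs (by omega)

theorem IsStoppingSet.treeBound_le_card {S : Finset V} (hS : IsStoppingSet adj S)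
    (hdeg : ∀ v ∈ S, d ≤ #{c | adj v c}) (hd : 2 ≤ d) (hg6 : 6 ≤ g) (hge : Even g)
    (hg : (g : ℕ∞) ≤ (bip adj).egirth) (hne : S.Nonempty) : treeBound d g ≤ #S := by
  obtain ⟨v₀, hv₀⟩ := hne
  obtain ⟨c₀, hc₀⟩ := card_pos.mp (by have := hdeg v₀ hv₀; omega : 0 < #{c | adj v₀ c})
  refine treeBound_le_card_of_bip (adj := fun v c => v ∈ S ∧ adj v c) hd hg6 hge
    (hg.trans (egirth_anti (bip_mono fun _ _ h => h.2))) (fun v c h => ?_) (fun c => ?_)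
    (c₀ := c₀) ⟨hv₀, by simpa using hc₀⟩ (fun v c h => h.1)
  · convert hdeg v h.1 using 2
    simp [h.1]
  · convert hS c using 2
    ext v
    simp

end TannerGraph

theorem stmt_6_general (p : ℕ) (m n d g : ℕ) (hd : 2 ≤ d)
    (hg6 : 6 ≤ g) (hge : Even g)
    (H : Matrix (Fin m) (Fin n) (ZMod p))
    -- all entries of H are 0 or 1
    (h01 : ∀ i j, H i j = 0 ∨ H i j = 1)
    -- every column of H contains exactly d ones
    (hcol : ∀ j : Fin n, Nat.card {i : Fin m // H i j = 1} = d)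
    -- the Tanner graph of H has girth at least g
    (hgirth : (g : ℕ∞) ≤ (bip fun (j : Fin n) (i : Fin m) => H i j = 1).egirth) :
    -- every nonzero x with H·x = 0 has Hamming weight at least T(d,g)
    ∀ x : Fin n → ZMod p, H.mulVec x = 0 → x ≠ 0 →
      treeBound d g ≤ Nat.card {j : Fin n // x j ≠ 0} := by
  intro x hx hx0
  rw [Nat.card_eq_fintype_card, Fintype.card_subtype]
  convert (Matrix.isStoppingSet_support_of_mulVec_eq_zero h01 hx).treeBound_le_card
    (fun j _ => ?_) hd hg6 hge hgirth ?_
  · rw [← hcol j, Nat.card_eq_fintype_card, Fintype.card_subtype]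
    exact card_le_card fun i hi => by simpa using hi
  · obtain ⟨j, hj⟩ := Function.ne_iff.mp hx0
    exact ⟨j, by simpa using hj⟩

theorem stmt_6 (p : ℕ) (hp : p.Prime) (m n d g : ℕ) (hd : 2 ≤ d)
    (hg6 : 6 ≤ g) (hge : Even g)
    (H : Matrix (Fin m) (Fin n) (ZMod p))
    -- all entries of H are 0 or 1
    (h01 : ∀ i j, H i j = 0 ∨ H i j = 1)
    -- every column of H contains exactly d ones
    (hcol : ∀ j : Fin n, Nat.card {i : Fin m // H i j = 1} = d)
    -- the Tanner graph of H has girth at least g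
    (hgirth : (g : ℕ∞) ≤ (bip fun (j : Fin n) (i : Fin m) => H i j = 1).egirth) :
    -- every nonzero x with H·x = 0 has Hamming weight at least T(d,g)
    ∀ x : Fin n → ZMod p, H.mulVec x = 0 → x ≠ 0 →
      treeBound d g ≤ Nat.card {j : Fin n // x j ≠ 0} :=
  stmt_6_general p m n d g hd hg6 hge H h01 hcol hgirth
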